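/- arXiv:1009.1892 — 2 statements merged into one kernel-verified Lean document; each statement's English description precedes it below -/
import Mathlib

section
/- For the generalized Lucas polynomials G_{k,n} and generalized Fibonacci polynomials F_{k,n}, the partial derivative of G_{k,n} with respect to t_j equals n·F_{k,n-j}, for 1 ≤ j ≤ n. -/
open Finset MvPolynomial

/-- Index set of nonnegative integer vectors `α = (α_1, …, α_k)` with `∑ j·α_j = n`. -/
noncomputable def idx (k n : ℕ) : Finset (Fin k → ℕ) :=
  (Fintype.piFinset fun _ : Fin k => Finset.range (n + 1)).filter
    fun α => ∑ j : Fin k, (j.1 + 1) * α j = n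

/-- Generalized Fibonacci polynomials `F_{k,n}`. -/
noncomputable def Fib (k n : ℕ) : MvPolynomial (Fin k) ℚ :=
  ∑ α ∈ idx k n,
    (Nat.multinomial Finset.univ α : ℚ) • ∏ j : Fin k, X j ^ α j

/-- Generalized Lucas polynomials `G_{k,n}`, with `G_{k,0} = k`. -/
noncomputable def Luc (k n : ℕ) : MvPolynomial (Fin k) ℚ :=
  if n = 0 then (k : MvPolynomial (Fin k) ℚ)
  else ∑ α ∈ idx k n,
    (((n : ℚ) / (∑ j : Fin k, α j)) * (Nat.multinomial Finset.univ α : ℚ)) •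
      ∏ j : Fin k, X j ^ α j

/-! Differentiating termwise, `∂ t^α / ∂ t_j = α_j t^(α - e_j)`, so only the `α` with `α_j ≥ 1`
contribute, and these are exactly `α = β + e_j` with `β` in the index set of `n - j`. The
coefficients match because `α_j · multinomial(α) = |α| · multinomial(α - e_j)`, which turns the
factor `n / |α|` of `G_{k,n}` into `n`. -/

theorem Nat.add_one_mul_multinomial_add_single {ι : Type*} [DecidableEq ι] {s : Finset ι}
    {a : ι} (ha : a ∈ s) (f : ι → ℕ) :
    (f a + 1) * Nat.multinomial s (f + Pi.single a 1) =
      (∑ i ∈ s, f i + 1) * Nat.multinomial s f := by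
  have hoff : ∀ i ∈ s.erase a, (f + Pi.single a 1 : ι → ℕ) i = f i := fun i hi => by
    simp [(mem_erase.mp hi).1]
  rw [← insert_erase ha, Nat.multinomial_insert (notMem_erase a s),
    Nat.multinomial_insert (notMem_erase a s), Nat.multinomial_congr hoff, sum_congr rfl hoff,
    sum_insert (notMem_erase a s)]
  simp only [Pi.add_apply, Pi.single_eq_same]
  rw [← mul_assoc, ← mul_assoc, Nat.add_one_mul_choose_eq, add_right_comm (f a) _ 1]
  ring

theorem sum_mul_add_single {ι : Type*} [Fintype ι] [DecidableEq ι] (w f : ι → ℕ) (a : ι) :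
    ∑ i, w i * (f + Pi.single a 1 : ι → ℕ) i = ∑ i, w i * f i + w a := by
  simp [mul_add, sum_add_distrib, Pi.single_apply]

theorem prod_univ_X_pow_eq_monomial {σ R : Type*} [Fintype σ] [CommSemiring R] (f : σ → ℕ) :
    ∏ i, (X i : MvPolynomial σ R) ^ f i = monomial (Finsupp.equivFunOnFinite.symm f) 1 := by
  rw [monomial_eq, C_1, one_mul, Finsupp.prod_fintype _ _ (fun _ => pow_zero _)]
  rfl

theorem pderiv_prod_X_pow {σ R : Type*} [Fintype σ] [DecidableEq σ] [CommSemiring R]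
    (f : σ → ℕ) (j : σ) :
    pderiv j (∏ i, (X i : MvPolynomial σ R) ^ f i) =
      (f j : R) • ∏ i, X i ^ (f - Pi.single j 1 : σ → ℕ) i := by
  have hsub : Finsupp.equivFunOnFinite.symm f - Finsupp.single j 1 =
      Finsupp.equivFunOnFinite.symm (f - Pi.single j 1) := by
    ext i; simp [Pi.single_apply, Finsupp.single_apply, eq_comm]
  rw [prod_univ_X_pow_eq_monomial, prod_univ_X_pow_eq_monomial, pderiv_monomial, smul_monomial,
    hsub]
  simp

theorem Nat.cast_multinomial_add_single_mul_div {ι K : Type*} [Fintype ι] [DecidableEq ι]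
    [Field K] [CharZero K] (f : ι → ℕ) (a : ι) :
    (Nat.multinomial univ (f + Pi.single a 1) : K) * (f a + 1) /
        (∑ i, (f + Pi.single a 1 : ι → ℕ) i : ℕ) = Nat.multinomial univ f := by
  have hsum := sum_mul_add_single 1 f a
  simp only [Pi.one_apply, one_mul] at hsum
  rw [hsum, div_eq_iff (Nat.cast_ne_zero.mpr (Nat.succ_ne_zero _)), mul_comm _ (f a + 1 : K)]
  exact_mod_cast Nat.add_one_mul_multinomial_add_single (mem_univ a) f |>.trans (mul_comm _ _)

theorem mem_idx {k n : ℕ} {α : Fin k → ℕ} :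
    α ∈ idx k n ↔ ∑ i : Fin k, (i.1 + 1) * α i = n := by
  simp only [idx, mem_filter, Fintype.mem_piFinset, mem_range, and_iff_right_iff_imp]
  rintro rfl i
  calc α i ≤ (i.1 + 1) * α i := Nat.le_mul_of_pos_left _ i.1.succ_pos
    _ ≤ ∑ i : Fin k, (i.1 + 1) * α i :=
      single_le_sum (f := fun i : Fin k => (i.1 + 1) * α i) (fun _ _ => Nat.zero_le _) (mem_univ i)
    _ < _ := Nat.lt_succ_self _

theorem filter_idx_ne_zero {k n : ℕ} {j : Fin k} (hj : j.1 + 1 ≤ n) :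
    (idx k n).filter (fun α => α j ≠ 0) =
      (idx k (n - (j.1 + 1))).map (addRightEmbedding (Pi.single j 1)) := by
  ext α
  simp only [mem_filter, mem_map, mem_idx, addRightEmbedding_apply]
  constructor
  · rintro ⟨hα, hαj⟩
    have hcancel : α - Pi.single j 1 + Pi.single j 1 = α := by
      funext i
      by_cases hi : i = j
      · subst hi; simp only [Pi.add_apply, Pi.sub_apply, Pi.single_eq_same]; omega
      · simp [hi]
    refine ⟨α - Pi.single j 1, ?_, hcancel⟩
    have := sum_mul_add_single (fun i : Fin k => i.1 + 1) (α - Pi.single j 1) j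
    rw [hcancel] at this
    omega
  · rintro ⟨β, hβ, rfl⟩
    exact ⟨by rw [sum_mul_add_single]; omega, by simp⟩

-- `t_j` is `X j` for `j : Fin k`, so the paper's index `j` is `j.1 + 1` here.
/-- The partial derivative of `G_{k,n}` with respect to `t_j` is `n · F_{k,n-j}`,
for `1 ≤ j ≤ n` (the variable `t_j` corresponds to the index `j : Fin k`,
i.e. `j.1 + 1` in 1-based counting). -/
theorem pderiv_Luc (k n : ℕ) (j : Fin k) (hj : j.1 + 1 ≤ n) :
    pderiv j (Luc k n) = (n : ℚ) • Fib k (n - (j.1 + 1)) := by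
  have hterm : ∀ (c : ℚ) (α : Fin k → ℕ), pderiv j (c • ∏ i, X i ^ α i) =
      (c * α j) • ∏ i, (X i : MvPolynomial (Fin k) ℚ) ^ (α - Pi.single j 1 : Fin k → ℕ) i := by
    intro c α
    rw [Derivation.map_smul, pderiv_prod_X_pow, smul_smul]
  rw [Luc, if_neg (by omega), Fib, map_sum, smul_sum,
    ← sum_filter_of_ne (p := fun α => α j ≠ 0) (fun α _ h => by contrapose! h; simp [hterm, h]),
    filter_idx_ne_zero hj, sum_map]
  refine sum_congr rfl fun β _ => ?_
  rw [addRightEmbedding_apply, hterm, add_tsub_cancel_right, smul_smul]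
  congr 1
  rw [← Nat.cast_multinomial_add_single_mul_div β j]
  simp only [Pi.add_apply, Nat.cast_sum, Nat.cast_add, Pi.single_eq_same, Nat.cast_one]
  ring
end

section
/- Let Γ(n) be the Catalan numbers with Γ(0) = 1, and let Γ̄ be the convolution inverse of Γ. Then the Rearick logarithm L(Γ)_n = Σ_{j=0}^n j·Γ(j)·Γ̄(n-j) equals binom(2n-1, n) for all n ≥ 1. -/
open Finset

/-- The `n`-th Catalan number `Γ(n) = C(2n, n)/(n+1)`. -/
def Γ (n : ℕ) : ℚ := (Nat.choose (2 * n) n : ℚ) / (n + 1)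

/-- Convolution product of sequences. -/
def conv (P Q : ℕ → ℚ) (n : ℕ) : ℚ :=
  ∑ j ∈ Finset.range (n + 1), P j * Q (n - j)

/-- The Rearick logarithm of a sequence `F` with convolution inverse `Fi`. -/
def LOG (F Fi : ℕ → ℚ) (n : ℕ) : ℚ :=
  ∑ j ∈ Finset.range (n + 1), (j : ℚ) * F j * Fi (n - j)

/-!
The Catalan series `C = ∑ Γ(n) Xⁿ` satisfies `C = 1 + X C²`, so its inverse is `1 - X C`, i.e.
`Γ̄(0) = 1` and `Γ̄(n + 1) = -Γ(n)`. Hence `L(Γ)_{m+1} = (m + 1) Γ(m + 1) - ∑ j Γ(j) Γ(m - j)`, and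
pairing `j` with `m - j` shows that the last sum is `m/2 · (Γ ∗ Γ)_m = m/2 · Γ(m + 1)`. What is left
is `(m + 2)/2 · Γ(m + 1) = C(2m + 2, m + 1)/2 = C(2m + 1, m + 1)`.
-/
lemma conv_eq_coeff_mul (P Q : ℕ → ℚ) (n : ℕ) :
    conv P Q n = PowerSeries.coeff n (PowerSeries.mk P * PowerSeries.mk Q) := by
  simp [conv, PowerSeries.coeff_mul,
    Finset.Nat.sum_antidiagonal_eq_sum_range_succ (fun i j => P i * Q j)]

lemma conv_left_cancel {P A B : ℕ → ℚ} (hP : P 0 ≠ 0) (h : ∀ n, conv P A n = conv P B n) :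
    A = B := by
  have hPne : PowerSeries.mk P ≠ 0 := fun h0 => hP (by simpa using congrArg (PowerSeries.coeff 0) h0)
  have hmul : PowerSeries.mk P * PowerSeries.mk A = PowerSeries.mk P * PowerSeries.mk B := by
    ext n; simpa only [conv_eq_coeff_mul] using h n
  funext n
  simpa using congrArg (PowerSeries.coeff n) (mul_left_cancel₀ hPne hmul)

lemma two_mul_LOG_self (P : ℕ → ℚ) (m : ℕ) : 2 * LOG P P m = m * conv P P m := by
  have hreflect : LOG P P m = ∑ j ∈ range (m + 1), ((m - j : ℕ) : ℚ) * P j * P (m - j) := by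
    rw [LOG, ← sum_range_reflect]
    refine sum_congr rfl fun j hj => ?_
    rw [Nat.add_sub_cancel, Nat.sub_sub_self (by simp at hj; omega)]
    ring
  calc 2 * LOG P P m = LOG P P m + LOG P P m := two_mul _
    _ = ∑ j ∈ range (m + 1), ((j : ℚ) + ((m - j : ℕ) : ℚ)) * (P j * P (m - j)) := by
      nth_rw 2 [hreflect]
      rw [LOG, ← sum_add_distrib]
      exact sum_congr rfl fun j _ => by ring
    _ = m * conv P P m := by
      rw [conv, mul_sum]
      refine sum_congr rfl fun j hj => ?_
      rw [← Nat.cast_add, Nat.add_sub_cancel' (by simp at hj; omega)]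

/-- Coefficients of `1 - X * F(X)`. -/
def oneSubXMul (F : ℕ → ℚ) : ℕ → ℚ
  | 0 => 1
  | n + 1 => -F n

lemma conv_oneSubXMul_succ (F : ℕ → ℚ) (n : ℕ) :
    conv F (oneSubXMul F) (n + 1) = F (n + 1) - conv F F n := by
  rw [conv, sum_range_succ, conv, sub_eq_add_neg, add_comm, ← sum_neg_distrib]
  congr 1
  · simp [oneSubXMul]
  · refine sum_congr rfl fun j hj => ?_
    rw [show n + 1 - j = (n - j) + 1 by simp at hj; omega]
    simp [oneSubXMul]

lemma LOG_oneSubXMul_succ (F : ℕ → ℚ) (n : ℕ) :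
    LOG F (oneSubXMul F) (n + 1) = (n + 1) * F (n + 1) - LOG F F n := by
  rw [LOG, sum_range_succ, LOG, sub_eq_add_neg, add_comm, ← sum_neg_distrib]
  congr 1
  · simp [oneSubXMul]
  · refine sum_congr rfl fun j hj => ?_
    rw [show n + 1 - j = (n - j) + 1 by simp at hj; omega]
    simp [oneSubXMul]

lemma Γ_eq_catalan (n : ℕ) : Γ n = catalan n := by
  have h := congrArg (Nat.cast : ℕ → ℚ) (succ_mul_catalan_eq_centralBinom n)
  push_cast [Nat.centralBinom_eq_two_mul_choose] at h
  rw [Γ, ← h]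
  field_simp

lemma conv_Γ_Γ (n : ℕ) : conv Γ Γ n = Γ (n + 1) := by
  simp only [conv, Γ_eq_catalan, catalan_succ' n]
  rw [Finset.Nat.sum_antidiagonal_eq_sum_range_succ (fun i j => catalan i * catalan j)]
  push_cast
  rfl

lemma conv_Γ_oneSubXMul (n : ℕ) : conv Γ (oneSubXMul Γ) n = if n = 0 then 1 else 0 := by
  cases n with
  | zero => simp [conv, Γ, oneSubXMul]
  | succ n => simp [conv_oneSubXMul_succ, conv_Γ_Γ]

lemma two_mul_choose_two_mul_sub_one {n : ℕ} (hn : 1 ≤ n) :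
    2 * (2 * n - 1).choose n = (2 * n).choose n := by
  obtain ⟨m, rfl⟩ := Nat.exists_eq_add_of_le' hn
  rw [show 2 * (m + 1) - 1 = 2 * m + 1 by omega, show 2 * (m + 1) = 2 * m + 1 + 1 by omega,
    Nat.choose_succ_succ (2 * m + 1) m, Nat.choose_symm_half]
  ring

theorem LOG_catalan_general (Γb : ℕ → ℚ)
    (hΓb : ∀ n, conv Γ Γb n = if n = 0 then 1 else 0)
    (n : ℕ) (hn : 1 ≤ n) :
    LOG Γ Γb n = (Nat.choose (2 * n - 1) n : ℚ) := by
  have hΓb_eq : Γb = oneSubXMul Γ :=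
    conv_left_cancel (P := Γ) (by simp [Γ]) fun k => by rw [hΓb, conv_Γ_oneSubXMul]
  obtain ⟨m, rfl⟩ := Nat.exists_eq_add_of_le' hn
  have hLOG : 2 * LOG Γ Γ m = m * Γ (m + 1) := by rw [two_mul_LOG_self, conv_Γ_Γ]
  have hΓ : (m + 2 : ℚ) * Γ (m + 1) = ((2 * (m + 1)).choose (m + 1) : ℕ) := by
    rw [Γ]; push_cast; field_simp; ring
  have hchoose := congrArg (Nat.cast : ℕ → ℚ) (two_mul_choose_two_mul_sub_one hn)
  push_cast at hchoose hΓ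
  rw [hΓb_eq, LOG_oneSubXMul_succ]
  linarith

/-- `L(Γ)_n = binom(2n-1, n)` for `n ≥ 1`. -/
theorem LOG_catalan (Γb : ℕ → ℚ) (hΓb0 : Γb 0 = 1)
    (hΓb : ∀ n, conv Γ Γb n = if n = 0 then 1 else 0)
    (n : ℕ) (hn : 1 ≤ n) :
    LOG Γ Γb n = (Nat.choose (2 * n - 1) n : ℚ) :=
  LOG_catalan_general Γb hΓb n hn
end
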